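/- For every integer n ≥ 1, the number of Catalan words of length n avoiding the vincular pattern 1-32 equals the Fibonacci number F_{2n−1}. -/
import Mathlib


/-- A Catalan word: a word of positive integers starting with 1 in which each
letter exceeds its predecessor by at most 1. -/
def IsCatalanWord {n : ℕ} (w : Fin n → ℕ) : Prop :=
  (∀ i, 1 ≤ w i) ∧ (∀ h : 0 < n, w ⟨0, h⟩ = 1) ∧
  ∀ i : ℕ, ∀ h : i + 1 < n, w ⟨i + 1, h⟩ ≤ w ⟨i, by omega⟩ + 1

/-- `w` contains the vincular pattern 1-32: there are indices `i < j` with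
`w i < w (j+1) < w j`. -/
def Contains1_32 {n : ℕ} (w : Fin n → ℕ) : Prop :=
  ∃ i j : ℕ, ∃ hj : j + 1 < n, ∃ hij : i < j,
    w ⟨i, by omega⟩ < w ⟨j + 1, hj⟩ ∧ w ⟨j + 1, hj⟩ < w ⟨j, by omega⟩

namespace CatAux

def Good {n : ℕ} (w : Fin n → ℕ) : Prop :=
  (∀ h : 0 < n, w ⟨0, h⟩ = 1) ∧
  ∀ i : ℕ, ∀ h : i + 1 < n, w ⟨i + 1, h⟩ = 1 ∨ w ⟨i + 1, h⟩ = w ⟨i, by omega⟩ ∨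
    w ⟨i + 1, h⟩ = w ⟨i, by omega⟩ + 1

lemma good_pos {n : ℕ} {w : Fin n → ℕ} (hw : Good w) :
    ∀ i, ∀ hi : i < n, 1 ≤ w ⟨i, hi⟩ := by
  intro i
  induction i with
  | zero => intro hi; rw [hw.1 hi]
  | succ k ih =>
    intro hi
    have hk := ih (by omega)
    rcases hw.2 k hi with h | h | h <;> omega

lemma good_le {n : ℕ} {w : Fin n → ℕ} (hw : Good w) :
    ∀ i, ∀ hi : i < n, w ⟨i, hi⟩ ≤ i + 1 := by
  intro i
  induction i with
  | zero => intro hi; rw [hw.1 hi]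
  | succ k ih =>
    intro hi
    have hk := ih (by omega)
    rcases hw.2 k hi with h | h | h <;> omega

lemma avoid_iff_good {n : ℕ} (w : Fin n → ℕ) :
    (IsCatalanWord w ∧ ¬ Contains1_32 w) ↔ Good w := by
  constructor
  · rintro ⟨⟨hpos, h0, hstep⟩, hav⟩
    refine ⟨h0, fun i h => ?_⟩
    by_contra hcon
    push_neg at hcon
    obtain ⟨h1, h2, h3⟩ := hcon
    have hle := hstep i h
    have hp1 := hpos ⟨i + 1, h⟩
    have hp0 : 1 ≤ w ⟨i, by omega⟩ := hpos ⟨i, by omega⟩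
    have hi0 : i ≠ 0 := by
      rintro rfl
      have := h0 (by omega)
      omega
    exact hav ⟨0, i, h, by omega, by have := h0 (by omega); omega, by omega⟩
  · intro hg
    have hpos := good_pos hg
    refine ⟨⟨fun i => hpos i.1 i.2, hg.1, fun i h => ?_⟩, ?_⟩
    · rcases hg.2 i h with h' | h' | h' <;> (have := hpos i (by omega); omega)
    · rintro ⟨i, j, hj, hij, hlt1, hlt2⟩
      have hpi : 1 ≤ w ⟨i, by omega⟩ := hpos i (by omega)
      rcases hg.2 j hj with h' | h' | h' <;> omega

/-- words of length n+1 that are Good -/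
def S (n : ℕ) : Set (Fin (n + 1) → ℕ) := {w | Good w}
def A (n : ℕ) : Set (Fin (n + 1) → ℕ) := {w | Good w ∧ w ⟨n, by omega⟩ = 1}
def B (n : ℕ) : Set (Fin (n + 1) → ℕ) := {w | Good w ∧ w ⟨n, by omega⟩ ≠ 1}
def Bs (n : ℕ) : Set (Fin (n + 2) → ℕ) :=
  {w | Good w ∧ w ⟨n + 1, by omega⟩ = w ⟨n, by omega⟩ ∧ w ⟨n + 1, by omega⟩ ≠ 1}
def Bu (n : ℕ) : Set (Fin (n + 2) → ℕ) :=
  {w | Good w ∧ w ⟨n + 1, by omega⟩ = w ⟨n, by omega⟩ + 1}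

lemma S_finite (n : ℕ) : (S n).Finite := by
  apply Set.Finite.subset (Set.Finite.pi (fun i : Fin (n + 1) => Set.finite_Iic (n + 1)))
  intro w hw
  simp only [Set.mem_pi, Set.mem_univ, Set.mem_Iic, forall_true_left]
  intro i
  have := good_le hw i.1 i.2
  have := i.2
  calc w i = w ⟨i.1, i.2⟩ := rfl
  _ ≤ i.1 + 1 := good_le hw i.1 i.2
  _ ≤ n + 1 := by omega

lemma A_sub (n : ℕ) : A n ⊆ S n := fun w hw => hw.1
lemma B_sub (n : ℕ) : B n ⊆ S n := fun w hw => hw.1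
lemma Bs_sub (n : ℕ) : Bs n ⊆ S (n + 1) := fun w hw => hw.1
lemma Bu_sub (n : ℕ) : Bu n ⊆ S (n + 1) := fun w hw => hw.1

lemma snoc_mk_lt {n : ℕ} (u : Fin (n + 1) → ℕ) (v : ℕ) {i : ℕ} {h2 : i < n + 2}
    (h : i < n + 1) : (Fin.snoc u v : Fin (n + 2) → ℕ) ⟨i, h2⟩ = u ⟨i, h⟩ := by
  rw [show (⟨i, h2⟩ : Fin (n + 2)) = Fin.castSucc ⟨i, h⟩ from rfl, Fin.snoc_castSucc]

lemma snoc_mk_last {n : ℕ} (u : Fin (n + 1) → ℕ) (v : ℕ) {h2 : n + 1 < n + 2} :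
    (Fin.snoc u v : Fin (n + 2) → ℕ) ⟨n + 1, h2⟩ = v := by
  rw [show (⟨n + 1, h2⟩ : Fin (n + 2)) = Fin.last (n + 1) from rfl, Fin.snoc_last]

lemma good_init {n : ℕ} {w : Fin (n + 2) → ℕ} (hw : Good w) : Good (Fin.init w) := by
  constructor
  · intro h; exact hw.1 (by omega)
  · intro i h
    rcases hw.2 i (by omega) with h' | h' | h'
    · exact Or.inl h'
    · exact Or.inr (Or.inl h')
    · exact Or.inr (Or.inr h')

lemma good_snoc {n : ℕ} (u : Fin (n + 1) → ℕ) (v : ℕ) :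
    Good (Fin.snoc u v : Fin (n + 2) → ℕ) ↔
      Good u ∧ (v = 1 ∨ v = u ⟨n, by omega⟩ ∨ v = u ⟨n, by omega⟩ + 1) := by
  constructor
  · intro hg
    refine ⟨⟨fun h => ?_, fun i h => ?_⟩, ?_⟩
    · have h' := hg.1 (show 0 < n + 2 by omega)
      rw [snoc_mk_lt u v (show 0 < n + 1 by omega)] at h'
      exact h' 
    · have h' := hg.2 i (by omega)
      rw [snoc_mk_lt u v h, snoc_mk_lt u v (show i < n + 1 by omega)] at h'
      exact h'
    · have h' := hg.2 n (by omega)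
      rw [snoc_mk_last u v, snoc_mk_lt u v (Nat.lt_succ_self n)] at h'
      exact h'
  · rintro ⟨hu, hv⟩
    constructor
    · intro h
      rw [snoc_mk_lt u v (by omega)]
      exact hu.1 (by omega)
    · intro i h
      by_cases hi : i + 1 < n + 1
      · rw [snoc_mk_lt u v hi, snoc_mk_lt u v (show i < n + 1 by omega)]
        exact hu.2 i hi
      · have hieq : i = n := by omega
        subst hieq
        rw [snoc_mk_last u v, snoc_mk_lt u v (Nat.lt_succ_self _)]
        exact hv

lemma ncard_eq_of_bij {α β : Type*} {s : Set α} {t : Set β} (f : α → β)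
    (hb : Set.BijOn f s t) : s.ncard = t.ncard := by
  rw [← hb.image_eq, Set.ncard_image_of_injOn hb.injOn]

lemma card_A_succ (n : ℕ) : (A (n + 1)).ncard = (S n).ncard := by
  apply ncard_eq_of_bij Fin.init
  refine ⟨fun w hw => good_init hw.1, fun w hw w' hw' h => ?_, fun u hu => ?_⟩
  · have e : w = Fin.snoc (Fin.init w) (w (Fin.last (n + 1))) := (Fin.snoc_init_self w).symm
    have e' : w' = Fin.snoc (Fin.init w') (w' (Fin.last (n + 1))) := (Fin.snoc_init_self w').symm
    have l1 : w (Fin.last (n + 1)) = 1 := hw.2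
    have l2 : w' (Fin.last (n + 1)) = 1 := hw'.2
    rw [e, e', h, l1, l2]
  · refine ⟨Fin.snoc u 1, ⟨(good_snoc u 1).2 ⟨hu, Or.inl rfl⟩, ?_⟩, (by simp)⟩
    exact snoc_mk_last u 1

lemma card_Bs (n : ℕ) : (Bs n).ncard = (B n).ncard := by
  apply ncard_eq_of_bij Fin.init
  refine ⟨fun w hw => ?_, fun w hw w' hw' h => ?_, fun u hu => ?_⟩
  · refine ⟨good_init hw.1, ?_⟩
    have e : Fin.init w ⟨n, by omega⟩ = w ⟨n, by omega⟩ := rfl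
    rw [e, ← hw.2.1]
    exact hw.2.2
  · have e : w = Fin.snoc (Fin.init w) (w (Fin.last (n + 1))) := (Fin.snoc_init_self w).symm
    have e' : w' = Fin.snoc (Fin.init w') (w' (Fin.last (n + 1))) := (Fin.snoc_init_self w').symm
    have l1 : w (Fin.last (n + 1)) = Fin.init w ⟨n, by omega⟩ := hw.2.1
    have l2 : w' (Fin.last (n + 1)) = Fin.init w' ⟨n, by omega⟩ := hw'.2.1
    rw [e, e', l1, l2, h]
  · refine ⟨Fin.snoc u (u ⟨n, by omega⟩),
      ⟨(good_snoc u _).2 ⟨hu.1, Or.inr (Or.inl rfl)⟩, ?_, ?_⟩,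
      (by simp)⟩
    · rw [snoc_mk_last, snoc_mk_lt u _ (Nat.lt_succ_self n)]
    · rw [snoc_mk_last]
      exact hu.2

lemma card_Bu (n : ℕ) : (Bu n).ncard = (S n).ncard := by
  apply ncard_eq_of_bij Fin.init
  refine ⟨fun w hw => good_init hw.1, fun w hw w' hw' h => ?_, fun u hu => ?_⟩
  · have e : w = Fin.snoc (Fin.init w) (w (Fin.last (n + 1))) := (Fin.snoc_init_self w).symm
    have e' : w' = Fin.snoc (Fin.init w') (w' (Fin.last (n + 1))) := (Fin.snoc_init_self w').symm
    have l1 : w (Fin.last (n + 1)) = Fin.init w ⟨n, by omega⟩ + 1 := hw.2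
    have l2 : w' (Fin.last (n + 1)) = Fin.init w' ⟨n, by omega⟩ + 1 := hw'.2
    rw [e, e', l1, l2, h]
  · refine ⟨Fin.snoc u (u ⟨n, by omega⟩ + 1),
      ⟨(good_snoc u _).2 ⟨hu, Or.inr (Or.inr rfl)⟩, ?_⟩,
      (by simp)⟩
    rw [snoc_mk_last, snoc_mk_lt u _ (Nat.lt_succ_self n)]

lemma card_S_split (n : ℕ) : (S n).ncard = (A n).ncard + (B n).ncard := by
  have hu : S n = A n ∪ B n := by
    ext w
    simp only [S, A, B, Set.mem_setOf_eq, Set.mem_union]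
    tauto
  have hd : Disjoint (A n) (B n) := by
    rw [Set.disjoint_left]
    rintro w ⟨_, h1⟩ ⟨_, h2⟩
    exact h2 h1
  rw [hu, Set.ncard_union_eq hd ((S_finite n).subset (A_sub n)) ((S_finite n).subset (B_sub n))]

lemma B_succ_split (n : ℕ) :
    (B (n + 1)).ncard = (B n).ncard + (S n).ncard := by
  have hu : B (n + 1) = Bs n ∪ Bu n := by
    ext w
    constructor
    · rintro ⟨hg, hne⟩
      rcases hg.2 n (by omega) with h | h | h
      · exact absurd h hne
      · exact Or.inl ⟨hg, h, hne⟩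
      · exact Or.inr ⟨hg, h⟩
    · rintro (⟨hg, he, hne⟩ | ⟨hg, he⟩)
      · exact ⟨hg, hne⟩
      · refine ⟨hg, ?_⟩
        have hp := good_pos hg n (by omega)
        omega
  have hd : Disjoint (Bs n) (Bu n) := by
    rw [Set.disjoint_left]
    rintro w ⟨_, h1, _⟩ ⟨_, h2⟩
    omega
  rw [hu, Set.ncard_union_eq hd ((S_finite (n + 1)).subset (Bs_sub n))
    ((S_finite (n + 1)).subset (Bu_sub n)), card_Bs, card_Bu]

lemma card_A0 : (A 0).ncard = 1 := by
  have : A 0 = {fun _ => 1} := by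
    ext w
    simp only [A, Set.mem_setOf_eq, Set.mem_singleton_iff]
    constructor
    · rintro ⟨hg, _⟩
      funext i
      have h1 := hg.1 (by omega)
      have hieq : i = ⟨0, by omega⟩ := by
        apply Fin.ext
        have := i.isLt
        have h2 := i.isLt
        omega
      rw [hieq, h1]
    · rintro rfl
      exact ⟨⟨fun _ => rfl, fun i h => by omega⟩, rfl⟩
  rw [this, Set.ncard_singleton]

lemma card_B0 : (B 0).ncard = 0 := by
  have : B 0 = ∅ := by
    ext w
    simp only [B, Set.mem_setOf_eq, Set.mem_empty_iff_false, iff_false, not_and]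
    intro hg hne
    exact hne (hg.1 (by omega))
  rw [this, Set.ncard_empty]

lemma main_count (n : ℕ) :
    (B n).ncard = Nat.fib (2 * n) ∧ (S n).ncard = Nat.fib (2 * n + 1) := by
  induction n with
  | zero =>
    refine ⟨by simpa using card_B0, ?_⟩
    rw [card_S_split 0, card_A0, card_B0]
    norm_num [Nat.fib_one]
  | succ k ih =>
    have hb : (B (k + 1)).ncard = Nat.fib (2 * (k + 1)) := by
      rw [B_succ_split, ih.1, ih.2]
      have e1 : 2 * (k + 1) = 2 * k + 2 := by ring
      rw [e1]
      have f1 : Nat.fib (2 * k + 2) = Nat.fib (2 * k) + Nat.fib (2 * k + 1) := Nat.fib_add_two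
      omega
    have ha : (A (k + 1)).ncard = Nat.fib (2 * k + 1) := by
      rw [card_A_succ, ih.2]
    refine ⟨hb, ?_⟩
    rw [card_S_split (k + 1), ha, hb]
    have e1 : 2 * (k + 1) = 2 * k + 2 := by ring
    rw [e1]
    have f2 : Nat.fib (2 * k + 2 + 1) = Nat.fib (2 * k + 1) + Nat.fib (2 * k + 2) :=
      Nat.fib_add_two (n := 2 * k + 1)
    omega

end CatAux

theorem catalan_avoid_1_32 (n : ℕ) (hn : 1 ≤ n) :
    Set.ncard {w : Fin n → ℕ | IsCatalanWord w ∧ ¬ Contains1_32 w} =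
      Nat.fib (2 * n - 1) := by
  obtain ⟨m, rfl⟩ : ∃ m, n = m + 1 := ⟨n - 1, by omega⟩
  have hset : {w : Fin (m + 1) → ℕ | IsCatalanWord w ∧ ¬ Contains1_32 w} = CatAux.S m := by
    ext w
    exact CatAux.avoid_iff_good w
  rw [hset, (CatAux.main_count m).2]
  have : 2 * (m + 1) - 1 = 2 * m + 1 := by omega
  rw [this]
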